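/- arXiv:1701.02509 — 8 statements merged into one kernel-verified Lean document; each statement's English description precedes it below -/
import Mathlib

section
/- Let (S→, ≤, *) be a finite separation system, F ⊆ 2^{S→} a family of stars, and F' the essential core of F. Then the F'-tangles of S are precisely the F-tangles of S. -/
open Classical

namespace SepDuality

section Defs

variable {D : Type*} [PartialOrder D] {V : Type*}

/-- `r` is trivial in the separation (sub)system `S`: some `s ∈ S` satisfies `r < s` and
`r < s*`. -/
def TrivialIn (star : D → D) (S : Set D) (r : D) : Prop :=
  ∃ s ∈ S, r < s ∧ r < star s

/-- A star of separations: a set of nondegenerate oriented separations pointing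
towards each other. -/
def IsStarSet (star : D → D) (σ : Set D) : Prop :=
  (∀ s ∈ σ, star s ≠ s) ∧ ∀ r ∈ σ, ∀ s ∈ σ, r ≠ s → r ≤ star s

/-- An orientation of (the unoriented separations underlying) `S`: it contains, for every
`s ∈ S`, exactly one of `s`, `s*`. -/
def IsOrientation (star : D → D) (S : Set D) (O : Set D) : Prop :=
  O ⊆ S ∧ (∀ s ∈ S, s ∈ O ∨ star s ∈ O) ∧ ∀ s ∈ O, star s ∈ O → star s = s

/-- `O` avoids `F` if no subset of `O` lies in `F`. -/
def Avoids (O : Set D) (F : Set (Set D)) : Prop := ∀ σ ∈ F, ¬σ ⊆ O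

/-- `O` is consistent: no two of its elements that are orientations of distinct separations
point away from each other. -/
def Consistent (star : D → D) (O : Set D) : Prop :=
  ∀ r s : D, r < s → star r ∈ O → s ∈ O → r = star s

/-- An `F`-tangle of `S`: a consistent orientation of `S` avoiding `F`. -/
def FTangle (star : D → D) (S : Set D) (F : Set (Set D)) (O : Set D) : Prop :=
  IsOrientation star S O ∧ Consistent star O ∧ Avoids O F

/-- An `S`-tree: a (finite) tree `T` together with `α` mapping its oriented edges to `S`,
commuting with the involutions. -/
def IsSTree (star : D → D) (S : Set D) (T : SimpleGraph V) (α : V → V → D) : Prop :=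
  T.Connected ∧ T.IsAcyclic ∧ (∀ x y : V, T.Adj x y → α x y ∈ S) ∧
    ∀ x y : V, T.Adj x y → α y x = star (α x y)

/-- The star `α(F→_t)` associated with a node `t`. -/
def starAt (T : SimpleGraph V) (α : V → V → D) (t : V) : Set D :=
  {d | ∃ x : V, T.Adj x t ∧ α x t = d}

/-- The `S`-tree `(T, α)` is over `F`. -/
def IsOver (T : SimpleGraph V) (α : V → V → D) (F : Set (Set D)) : Prop :=
  ∀ t : V, starAt T α t ∈ F

/-- `x` is a leaf of `T`. -/
def IsLeaf (T : SimpleGraph V) (x : V) : Prop := ∃! y : V, T.Adj x y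

/-- The natural strict partial order on oriented edges of a tree: `(x,y) < (u,v)` iff the
edges are distinct and the unique `{x,y}`–`{u,v}` path joins `y` to `u` (equivalently,
there is a path from `y` to `u` avoiding `x` and `v`). -/
def edgeLT (T : SimpleGraph V) (e f : V × V) : Prop :=
  ¬(e.1 = f.1 ∧ e.2 = f.2) ∧ ¬(e.1 = f.2 ∧ e.2 = f.1) ∧
    ∃ p : T.Walk e.2 f.1, p.IsPath ∧ e.1 ∉ p.support ∧ f.2 ∉ p.support

/-- The natural partial order on oriented edges of a tree. -/
def edgeLE (T : SimpleGraph V) (e f : V × V) : Prop := e = f ∨ edgeLT T e f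

/-- `(T, α)` is order-respecting. -/
def OrderRespecting (T : SimpleGraph V) (α : V → V → D) : Prop :=
  ∀ e f : V × V, T.Adj e.1 e.2 → T.Adj f.1 f.2 → edgeLE T e f →
    α e.1 e.2 ≤ α f.1 f.2

/-- `(T, α)` is irredundant. -/
def Irredundant (T : SimpleGraph V) (α : V → V → D) : Prop :=
  ∀ t t' t'' : V, T.Adj t' t → T.Adj t'' t → t' ≠ t'' → α t' t ≠ α t'' t

/-- `(T, α)` is tight: every associated star is antisymmetric. -/
def Tight (star : D → D) (T : SimpleGraph V) (α : V → V → D) : Prop :=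
  ∀ t : V, ∀ d ∈ starAt T α t, star d ≠ d → star d ∉ starAt T α t

/-- `(T, α)` is essential: irredundant, tight, and no `α(e)` is trivial in `S`. -/
def Essential (star : D → D) (S : Set D) (T : SimpleGraph V) (α : V → V → D) : Prop :=
  Irredundant T α ∧ Tight star T α ∧ ∀ x y : V, T.Adj x y → ¬TrivialIn star S (α x y)

/-- The essential core `F' = {σ \ S⁻ : σ ∈ F}` of `F`, where `S⁻` is the set of separations
trivial in `S`. -/
def essentialCore (star : D → D) (S : Set D) (F : Set (Set D)) : Set (Set D) :=
  (fun σ => σ \ {r : D | TrivialIn star S r}) '' F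

/-- `T'` (a tree on the vertex set `V' ⊆ V`) is a minor of the tree `T`: it is obtained
from a subtree of `T` (the union of the branch sets) by contracting the branch sets. -/
def TreeMinor (T : SimpleGraph V) (V' : Set V) (T' : SimpleGraph V') : Prop :=
  ∃ B : V' → Set V,
    (∀ a : V', (a : V) ∈ B a) ∧
    (∀ a b : V', a ≠ b → Disjoint (B a) (B b)) ∧
    (∀ a : V', (T.induce (B a)).Connected) ∧
    ∀ a b : V', a ≠ b → (T'.Adj a b ↔ ∃ u ∈ B a, ∃ v ∈ B b, T.Adj u v)

/-- `F` forces `s` if `{s*} ∈ F`. -/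
def Forces (star : D → D) (F : Set (Set D)) (s : D) : Prop :=
  ({star s} : Set D) ∈ F

/-- `F` is standard for `S`: it forces every separation trivial in `S`. -/
def StandardFor (star : D → D) (S : Set D) (F : Set (Set D)) : Prop :=
  ∀ r ∈ S, TrivialIn star S r → Forces star F r

section UniverseOfSeparations

variable {U : Type*} [Lattice U]

/-- `s0` emulates `r` in `S`. -/
def EmulatesIn (star : U → U) (S : Set U) (r s0 : U) : Prop :=
  r ≤ s0 ∧ ∀ s ∈ S, s ≠ star r → r ≤ s → s ⊔ s0 ∈ S

/-- The shifting map `f↓(r)(s0)`: it sends each `s ≥ r` with `s ≠ r*` to `s ⊔ s0`, and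
the inverse `s*` of such an `s` to `(s ⊔ s0)*`. -/
noncomputable def shiftFun (star : U → U) (r s0 t : U) : U :=
  if r ≤ t ∧ t ≠ star r then t ⊔ s0 else star (star t ⊔ s0)

/-- `S→_{≥ r}`: the set of orientations of separations in `S` having an orientation `≥ r`. -/
def SgeR (star : U → U) (S : Set U) (r : U) : Set U :=
  {s ∈ S | r ≤ s ∨ r ≤ star s}

/-- `s0` emulates `r` in `S` for `F`. -/
def EmulatesFor (star : U → U) (S : Set U) (F : Set (Set U)) (r s0 : U) : Prop :=
  EmulatesIn star S r s0 ∧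
    ∀ σ ∈ F, σ ⊆ SgeR star S r \ {star r} → (∃ s ∈ σ, r ≤ s) →
      shiftFun star r s0 '' σ ∈ F

/-- `S` is `F`-separable. -/
def FSeparable (star : U → U) (S : Set U) (F : Set (Set U)) : Prop :=
  ∀ r ∈ S, ∀ r' ∈ S,
    ¬TrivialIn star S r → ¬TrivialIn star S r' →
    star r ≠ r → star r' ≠ r' →
    ¬Forces star F r → ¬Forces star F r' → r ≤ r' →
    ∃ s0 ∈ S, EmulatesFor star S F r s0 ∧ EmulatesFor star S F r' (star s0)

/-- The shift `α_{x,s0}` of `α` in an `S`-tree rooted at the leaf `x` (with unique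
neighbour `y`): edges `e ≥ e_x→ = (x,y)` are mapped to `α(e) ⊔ s0`, their reversals
to `(α(e) ⊔ s0)*`. -/
noncomputable def shiftAlpha (star : U → U) (T : SimpleGraph V)
    (x y : V) (s0 : U) (α : V → V → U) (a b : V) : U :=
  if edgeLE T (x, y) (a, b) then α a b ⊔ s0 else star (α b a ⊔ s0)

end UniverseOfSeparations

end Defs

section EssentialCore

variable {D : Type*} [PartialOrder D]

/-- A consistent orientation cannot contain `r*`: it would have to contain `s` or `s*`, and either
one points away from `r*`. -/
lemma TrivialIn.mem_of_consistent {star : D → D} (hinv : ∀ s : D, star (star s) = s)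
    {S O : Set D} (hO : IsOrientation star S O) (hC : Consistent star O) {r : D} (hrS : r ∈ S)
    (hr : TrivialIn star S r) : r ∈ O := by
  obtain ⟨s, hsS, hrs, hrs'⟩ := hr
  refine (hO.2.1 r hrS).resolve_right fun hr' => ?_
  rcases hO.2.1 s hsS with hs | hs
  · exact (hC r s hrs hr' hs ▸ hrs').false
  · exact (hinv s ▸ hC r (star s) hrs' hr' hs ▸ hrs).false

lemma avoids_essentialCore_iff {star : D → D} {S O : Set D} {F : Set (Set D)}
    (hO : {r | TrivialIn star S r} ⊆ O) : Avoids O (essentialCore star S F) ↔ Avoids O F := by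
  constructor
  · intro hA σ hσ hσO
    exact hA _ ⟨σ, hσ, rfl⟩ (Set.sdiff_subset.trans hσO)
  · rintro hA _ ⟨σ, hσ, rfl⟩ hσO
    refine hA σ hσ fun d hd => ?_
    by_cases htriv : TrivialIn star S d
    · exact hO htriv
    · exact hσO ⟨hd, htriv⟩

end EssentialCore

theorem essentialCore_tangles_general {D : Type*} [PartialOrder D] (star : D → D)
    (hinv : ∀ s : D, star (star s) = s)
    (F : Set (Set D)) (O : Set D) :
    FTangle star Set.univ (essentialCore star Set.univ F) O ↔
      FTangle star Set.univ F O := by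
  refine and_congr_right fun hO => and_congr_right fun hC => avoids_essentialCore_iff ?_
  exact fun r hr => hr.mem_of_consistent hinv hO hC (Set.mem_univ r)

/-- The `F'`-tangles of `S` are precisely its `F`-tangles, where `F'` is the
essential core of `F`. -/
theorem essentialCore_tangles {D : Type*} [PartialOrder D] [Fintype D] (star : D → D)
    (hinv : ∀ s : D, star (star s) = s)
    (hrev : ∀ r s : D, r ≤ s ↔ star s ≤ star r)
    (F : Set (Set D)) (hF : ∀ σ ∈ F, IsStarSet star σ) (O : Set D) :
    FTangle star Set.univ (essentialCore star Set.univ F) O ↔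
      FTangle star Set.univ F O :=
  essentialCore_tangles_general star hinv F O

end SepDuality
end

section
/- Let (S→, ≤, *) be a finite separation system, F ⊆ 2^{S→} a family of stars that is standard for S→, and F' the essential core of F. Then from every essential S-tree (T', α') over F' one can obtain an S-tree (T, α) over F by adding leaves: there exists an S-tree (T, α) over F such that T' is the subtree of T induced by the nodes of T', every node of T not in T' is a leaf of T joined to a node of T', and α restricted to E→(T') equals α'. -/
open Classical

/-!
At each node `t` of `T'` choose `σ t ∈ F` whose essential core is the star at `t`, and attach to
`t` one new leaf for every trivial separation `r ∈ σ t`, the edge towards `t` labelled `r`. The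
star at `t` becomes all of `σ t`, and the star at the new leaf is `{r*}`, which lies in `F`
because `F` is standard. The result is still a tree, since a leaf lies on no cycle.
-/

namespace SimpleGraph

variable {V W : Type*}

lemma Walk.IsCycle.nontrivial_neighborSet {G : SimpleGraph V} {u v : V} {p : G.Walk u u}
    (hp : p.IsCycle) (hv : v ∈ p.support) : (G.neighborSet v).Nontrivial := by
  have htwo := hp.ncard_neighborSet_toSubgraph_eq_two hv
  obtain ⟨x, y, hxy, hxy_eq⟩ := Set.ncard_eq_two.mp htwo
  have hsub : p.toSubgraph.neighborSet v ⊆ G.neighborSet v := p.toSubgraph.neighborSet_subset v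
  exact ⟨x, hsub (hxy_eq ▸ by simp), y, hsub (hxy_eq ▸ by simp), hxy⟩

lemma IsAcyclic.of_embedding_of_subsingleton_neighborSet {G : SimpleGraph V}
    {H : SimpleGraph W} (f : G ↪g H) (hG : G.IsAcyclic)
    (hleaf : ∀ w ∉ Set.range f, (H.neighborSet w).Subsingleton) : H.IsAcyclic := by
  intro v p hp
  have hsupp : ∀ w ∈ p.support, w ∈ Set.range f := fun w hw => by
    by_contra hw'
    exact (hp.nontrivial_neighborSet hw).not_subsingleton (hleaf w hw')
  have hinj : Function.Injective (Embedding.induce (G := H) (Set.range f)).toHom :=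
    (Embedding.induce (G := H) _).injective
  have hcycle : (p.induce _ hsupp).IsCycle := by
    rwa [← Walk.isCycle_map_iff_of_injective hinj, Walk.map_induce]
  exact (f.isoInduceRange.isAcyclic_iff.mp hG) _ hcycle

variable (G : SimpleGraph V) (L : V → Type*)

def attachLeaves : SimpleGraph (V ⊕ Σ t, L t) where
  Adj
    | .inl a, .inl b => G.Adj a b
    | .inl a, .inr l => l.1 = a
    | .inr l, .inl a => l.1 = a
    | .inr _, .inr _ => False
  symm := ⟨by
    rintro (a | l) (b | m) h
    exacts [G.adj_symm h, h, h, h]⟩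
  loopless := ⟨by
    rintro (a | l) h
    exacts [G.loopless.irrefl a h, h]⟩

variable {G L}

lemma attachLeaves_adj_inr {l : Σ t, L t} {w : V ⊕ Σ t, L t} :
    (G.attachLeaves L).Adj (.inr l) w ↔ w = .inl l.1 := by
  rcases w with a | m
  · exact ⟨fun (h : l.1 = a) => h ▸ rfl, fun h => (Sum.inl_injective h).symm⟩
  · exact ⟨False.elim, fun h => Sum.inl_ne_inr h.symm⟩

variable (G L) in
def attachLeavesInl : G ↪g G.attachLeaves L :=
  ⟨Function.Embedding.inl, Iff.rfl⟩

lemma Connected.attachLeaves (hG : G.Connected) : (G.attachLeaves L).Connected := by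
  have hreach : ∀ x, ∃ a, (G.attachLeaves L).Reachable (.inl a) x := by
    rintro (a | l)
    exacts [⟨a, .rfl⟩, ⟨l.1, Adj.reachable (attachLeaves_adj_inr.mpr rfl).symm⟩]
  refine (connected_iff _).mpr ⟨fun x y => ?_, hG.nonempty.map Sum.inl⟩
  obtain ⟨a, ha⟩ := hreach x
  obtain ⟨b, hb⟩ := hreach y
  exact ha.symm.trans (((hG.preconnected a b).map (attachLeavesInl G L).toHom).trans hb)

lemma IsAcyclic.attachLeaves (hG : G.IsAcyclic) : (G.attachLeaves L).IsAcyclic := by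
  refine hG.of_embedding_of_subsingleton_neighborSet (attachLeavesInl G L) ?_
  rintro (a | l) hw
  · exact absurd ⟨a, rfl⟩ hw
  · intro x hx y hy
    exact (attachLeaves_adj_inr.mp hx).trans (attachLeaves_adj_inr.mp hy).symm

end SimpleGraph

namespace SepDuality

section AttachLeaves

variable {D V : Type*} {L : V → Type*}

/-- `β l` labels the edge from the leaf `l` towards the tree; pairs of leaves are not edges, so
their value is irrelevant. -/
def attachLeavesLabel (star : D → D) (α : V → V → D) (β : (Σ t, L t) → D) :
    V ⊕ (Σ t, L t) → V ⊕ (Σ t, L t) → D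
  | .inl a, .inl b => α a b
  | .inl _, .inr l => star (β l)
  | .inr l, _ => β l

lemma IsSTree.attachLeaves [PartialOrder D] {star : D → D} (hinv : ∀ s, star (star s) = s)
    {S : Set D} (hS : ∀ s ∈ S, star s ∈ S) {G : SimpleGraph V} {α : V → V → D}
    {β : (Σ t, L t) → D} (hβ : ∀ l, β l ∈ S) (hG : IsSTree star S G α) :
    IsSTree star S (G.attachLeaves L) (attachLeavesLabel star α β) := by
  obtain ⟨hconn, hacyc, hαS, hαstar⟩ := hG
  refine ⟨hconn.attachLeaves, hacyc.attachLeaves, ?_, ?_⟩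
  · rintro (a | l) (b | m) h
    exacts [hαS a b h, hS _ (hβ m), hβ l, h.elim]
  · rintro (a | l) (b | m) h
    exacts [hαstar a b h, (hinv _).symm, rfl, h.elim]

lemma starAt_attachLeaves_inl (star : D → D) (G : SimpleGraph V) (α : V → V → D)
    (β : (Σ t, L t) → D) (t : V) :
    starAt (G.attachLeaves L) (attachLeavesLabel star α β) (.inl t) =
      starAt G α t ∪ Set.range (fun i : L t => β ⟨t, i⟩) := by
  ext d
  constructor
  · rintro ⟨a | l, h, rfl⟩
    · exact .inl ⟨a, h, rfl⟩
    · obtain ⟨t, i⟩ := l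
      obtain rfl : t = _ := h
      exact .inr ⟨i, rfl⟩
  · rintro (⟨a, h, rfl⟩ | ⟨i, rfl⟩)
    exacts [⟨.inl a, h, rfl⟩, ⟨.inr ⟨t, i⟩, rfl, rfl⟩]

lemma starAt_attachLeaves_inr (star : D → D) (G : SimpleGraph V) (α : V → V → D)
    (β : (Σ t, L t) → D) (l : Σ t, L t) :
    starAt (G.attachLeaves L) (attachLeavesLabel star α β) (.inr l) = {star (β l)} := by
  ext d
  constructor
  · rintro ⟨a | m, h, rfl⟩
    · obtain rfl : l.1 = a := h
      rfl
    · exact h.elim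
  · rintro rfl
    exact ⟨.inl l.1, rfl, rfl⟩

end AttachLeaves

theorem STree_of_essential_STree_general {D : Type*} [PartialOrder D] [Fintype D] (star : D → D)
    (hinv : ∀ s : D, star (star s) = s)
    (F : Set (Set D))
    (hstd : StandardFor star Set.univ F)
    {V₀ : Type} [Fintype V₀] (T' : SimpleGraph V₀) (α' : V₀ → V₀ → D)
    (hT' : IsSTree star Set.univ T' α')
    (hover : IsOver T' α' (essentialCore star Set.univ F)) :
    ∃ (V : Type) (_ : Fintype V) (T : SimpleGraph V) (α : V → V → D) (ι : V₀ → V),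
      Function.Injective ι ∧
      IsSTree star Set.univ T α ∧ IsOver T α F ∧
      (∀ a b : V₀, T.Adj (ι a) (ι b) ↔ T'.Adj a b) ∧
      (∀ a b : V₀, T'.Adj a b → α (ι a) (ι b) = α' a b) ∧
      (∀ v : V, v ∉ Set.range ι →
        ∃ a : V₀, T.Adj v (ι a) ∧ ∀ w : V, T.Adj v w → w = ι a) := by
  choose σ hσF hσ using hover
  -- leaves are indexed by `Fin`, not by elements of `D`, since the new tree must live in `Type`
  let σtriv (t : V₀) : Set D := σ t ∩ {r | TrivialIn star Set.univ r}
  let β (l : Σ t, Fin (Fintype.card (σtriv t))) : D := (Fintype.equivFin (σtriv l.1)).symm l.2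
  refine ⟨_, inferInstance, T'.attachLeaves _, attachLeavesLabel star α' β, Sum.inl,
    Sum.inl_injective, hT'.attachLeaves hinv (fun _ _ => Set.mem_univ _) (fun _ => Set.mem_univ _),
    ?_, fun _ _ => Iff.rfl, fun _ _ _ => rfl, ?_⟩
  · rintro (t | l)
    · have hβ : Set.range (fun i => β ⟨t, i⟩) = σtriv t :=
        ((Fintype.equivFin _).symm.surjective.range_comp _).trans Subtype.range_coe
      rw [starAt_attachLeaves_inl, hβ, ← hσ t, Set.sdiff_union_inter]
      exact hσF t
    · rw [starAt_attachLeaves_inr]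
      exact hstd _ (Set.mem_univ _) ((Fintype.equivFin _).symm l.2).2.2
  · rintro (a | l) hv
    · exact absurd ⟨a, rfl⟩ hv
    · exact ⟨l.1, SimpleGraph.attachLeaves_adj_inr.mpr rfl,
        fun _ => SimpleGraph.attachLeaves_adj_inr.mp⟩

/-- If `F` is standard for `S`, then from every essential `S`-tree over the essential
core `F'` of `F` one can obtain an `S`-tree over `F` by adding leaves. -/
theorem STree_of_essential_STree {D : Type*} [PartialOrder D] [Fintype D] (star : D → D)
    (hinv : ∀ s : D, star (star s) = s)
    (hrev : ∀ r s : D, r ≤ s ↔ star s ≤ star r)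
    (F : Set (Set D)) (hF : ∀ σ ∈ F, IsStarSet star σ)
    (hstd : StandardFor star Set.univ F)
    {V₀ : Type} [Fintype V₀] (T' : SimpleGraph V₀) (α' : V₀ → V₀ → D)
    (hT' : IsSTree star Set.univ T' α')
    (hess : Essential star Set.univ T' α')
    (hover : IsOver T' α' (essentialCore star Set.univ F)) :
    ∃ (V : Type) (_ : Fintype V) (T : SimpleGraph V) (α : V → V → D) (ι : V₀ → V),
      Function.Injective ι ∧
      IsSTree star Set.univ T α ∧ IsOver T α F ∧
      (∀ a b : V₀, T.Adj (ι a) (ι b) ↔ T'.Adj a b) ∧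
      (∀ a b : V₀, T'.Adj a b → α (ι a) (ι b) = α' a b) ∧
      (∀ v : V, v ∉ Set.range ι →
        ∃ a : V₀, T.Adj v (ι a) ∧ ∀ w : V, T.Adj v w → w = ι a) :=
  STree_of_essential_STree_general star hinv F hstd T' α' hT' hover

end SepDuality
end

section
/- Every irredundant S-tree (T, α) over a family of stars is order-respecting. In particular, the image α(E→(T)) is a nested set of separations in S→. -/
/-!
At a node `t`, irredundance makes `α(x,t)` and `α(z,t)` distinct elements of the star at `t`
for distinct neighbours `x ≠ z`, so `α(x,t) ≤ α(z,t)* = α(t,z)`. Chaining this along the path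
between two edges `e < f` gives `α(e) ≤ α(f)`. Nestedness follows because any two edges of a
tree have orientations that are comparable in the natural order on `E→(T)`.
-/
open Classical

namespace SepDuality

section TreeEdges

open SimpleGraph

variable {V : Type*} {G : SimpleGraph V}

lemma exists_isPath_avoiding_of_adj {b u v : V} {p : G.Walk b u} (hp : p.IsPath)
    (huv : G.Adj u v) :
    ∃ c w, s(c, w) = s(u, v) ∧
      ∃ q : G.Walk b c, q.IsPath ∧ w ∉ q.support ∧ q.support ⊆ p.support := by
  by_cases hv : v ∈ p.support
  · exact ⟨v, u, Sym2.eq_swap, p.takeUntil v hv, hp.takeUntil hv,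
      Walk.endpoint_notMem_support_takeUntil hp hv huv.ne, p.support_takeUntil_subset_support hv⟩
  · exact ⟨u, v, rfl, p, hp, hv, List.Subset.refl _⟩

lemma exists_isPath_between_edges (hG : G.Connected) {x y u v : V} (hxy : G.Adj x y)
    (huv : G.Adj u v) :
    ∃ a b c w, s(a, b) = s(x, y) ∧ s(c, w) = s(u, v) ∧
      ∃ q : G.Walk b c, q.IsPath ∧ a ∉ q.support ∧ w ∉ q.support := by
  obtain ⟨p⟩ := hG.preconnected y u
  obtain ⟨b, a, hba, q, hq, haq, -⟩ :=
    exists_isPath_avoiding_of_adj (p := p.toPath.1.reverse) p.toPath.2.reverse hxy.symm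
  obtain ⟨c, w, hcw, r, hr, hwr, hrq⟩ := exists_isPath_avoiding_of_adj hq.reverse huv
  refine ⟨a, b, c, w, by rw [Sym2.eq_swap, hba, Sym2.eq_swap], hcw, r, hr, ?_, hwr⟩
  exact fun har => haq (by simpa using hrq har)

lemma edgeLT.swap {e f : V × V} (h : edgeLT G e f) : edgeLT G f.swap e.swap := by
  obtain ⟨hne, hne', p, hp, he, hf⟩ := h
  exact ⟨fun h' => hne ⟨h'.2.symm, h'.1.symm⟩, fun h' => hne' ⟨h'.1.symm, h'.2.symm⟩,
    p.reverse, hp.reverse, by simpa using hf, by simpa using he⟩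

lemma edgeLE.swap {e f : V × V} (h : edgeLE G e f) : edgeLE G f.swap e.swap :=
  h.imp (fun h' => by rw [h']) edgeLT.swap

lemma edgeLE_or_eq_swap_of_isPath {e f : V × V} (p : G.Walk e.2 f.1) (hp : p.IsPath)
    (he : e.1 ∉ p.support) (hf : f.2 ∉ p.support) : edgeLE G e f ∨ e = f.swap := by
  by_cases hswap : e.1 = f.2 ∧ e.2 = f.1
  · exact Or.inr (Prod.ext hswap.1 hswap.2)
  by_cases heq : e.1 = f.1 ∧ e.2 = f.2
  · exact Or.inl (Or.inl (Prod.ext heq.1 heq.2))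
  exact Or.inl (Or.inr ⟨heq, hswap, p, hp, he, hf⟩)

lemma edgeLE_total (hG : G.Connected) {e f : V × V} (he : G.Adj e.1 e.2)
    (hf : G.Adj f.1 f.2) :
    edgeLE G e f ∨ edgeLE G f e ∨ edgeLE G e f.swap ∨ edgeLE G f.swap e := by
  obtain ⟨x, y⟩ := e
  obtain ⟨u, v⟩ := f
  obtain ⟨a, b, c, w, hab, hcw, p, hp, ha, hw⟩ := exists_isPath_between_edges hG he hf
  rcases edgeLE_or_eq_swap_of_isPath (e := (a, b)) (f := (c, w)) p hp ha hw with h | h <;>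
    rcases Sym2.eq_iff.1 hab with ⟨rfl, rfl⟩ | ⟨rfl, rfl⟩ <;>
    rcases Sym2.eq_iff.1 hcw with ⟨rfl, rfl⟩ | ⟨rfl, rfl⟩
  · exact Or.inl h
  · exact Or.inr (Or.inr (Or.inl h))
  · exact Or.inr (Or.inr (Or.inr h.swap))
  · exact Or.inr (Or.inl h.swap)
  · exact Or.inr (Or.inr (Or.inl (Or.inl h)))
  · exact Or.inl (Or.inl h)
  · exact Or.inl (Or.inl (congrArg Prod.swap h))
  · exact Or.inr (Or.inr (Or.inl (Or.inl (congrArg Prod.swap h))))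

end TreeEdges

section OrderRespecting

open SimpleGraph

variable {D : Type*} [PartialOrder D] {star : D → D} {V : Type*} {T : SimpleGraph V}
  {α : V → V → D}

lemma le_of_adj_of_adj_of_ne (hsym : ∀ x y : V, T.Adj x y → α y x = star (α x y))
    (hstars : ∀ t : V, IsStarSet star (starAt T α t)) (hirr : Irredundant T α)
    {x t z : V} (hxt : T.Adj x t) (htz : T.Adj t z) (hxz : x ≠ z) : α x t ≤ α t z := by
  rw [hsym z t htz.symm]
  exact (hstars t).2 _ ⟨x, hxt, rfl⟩ _ ⟨z, htz.symm, rfl⟩ (hirr t x z hxt htz.symm hxz)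

lemma le_of_isPath (hsym : ∀ x y : V, T.Adj x y → α y x = star (α x y))
    (hstars : ∀ t : V, IsStarSet star (starAt T α t)) (hirr : Irredundant T α)
    {x y u v : V} (p : T.Walk y u) (hp : p.IsPath) (hxy : T.Adj x y) (huv : T.Adj u v)
    (hx : x ∉ p.support) (hv : v ∉ p.support) (hswap : ¬(x = v ∧ y = u)) :
    α x y ≤ α u v := by
  induction p generalizing x with
  | nil => exact le_of_adj_of_adj_of_ne hsym hstars hirr hxy huv fun h => hswap ⟨h, rfl⟩
  | cons hyb q ih =>
    rw [Walk.cons_isPath_iff] at hp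
    simp only [Walk.support_cons, List.mem_cons, not_or] at hx hv
    have hxb : x ≠ _ := fun h => hx.2 (h ▸ q.start_mem_support)
    exact (le_of_adj_of_adj_of_ne hsym hstars hirr hxy hyb hxb).trans
      (ih hp.1 hyb huv hp.2 hv.2 fun h => hv.1 h.1.symm)

lemma orderRespecting_of_isStarSet (hsym : ∀ x y : V, T.Adj x y → α y x = star (α x y))
    (hstars : ∀ t : V, IsStarSet star (starAt T α t)) (hirr : Irredundant T α) :
    OrderRespecting T α := by
  rintro e f he hf (rfl | ⟨-, hswap, p, hp, he1, hf2⟩)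
  · exact le_rfl
  · exact le_of_isPath hsym hstars hirr p hp he hf he1 hf2 hswap

end OrderRespecting

theorem irredundant_orderRespecting_general {D : Type*} [PartialOrder D] (star : D → D)
    {V : Type} (T : SimpleGraph V) (α : V → V → D)
    (hT : IsSTree star Set.univ T α)
    (hstars : ∀ t : V, IsStarSet star (starAt T α t))
    (hirr : Irredundant T α) :
    OrderRespecting T α ∧
      ∀ d d' : D, (∃ x y : V, T.Adj x y ∧ α x y = d) →
        (∃ x y : V, T.Adj x y ∧ α x y = d') →
        (d ≤ d' ∨ d' ≤ d ∨ d ≤ star d' ∨ star d' ≤ d) := by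
  obtain ⟨hconn, -, -, hsym⟩ := hT
  have hord := orderRespecting_of_isStarSet hsym hstars hirr
  refine ⟨hord, ?_⟩
  rintro _ _ ⟨x, y, hxy, rfl⟩ ⟨u, v, huv, rfl⟩
  rw [← hsym u v huv]
  rcases edgeLE_total hconn (e := (x, y)) (f := (u, v)) hxy huv with h | h | h | h
  · exact Or.inl (hord _ _ hxy huv h)
  · exact Or.inr (Or.inl (hord _ _ huv hxy h))
  · exact Or.inr (Or.inr (Or.inl (hord _ _ hxy huv.symm h)))
  · exact Or.inr (Or.inr (Or.inr (hord _ _ huv.symm hxy h)))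

/-- Every irredundant `S`-tree over stars is order-respecting; in particular the image
`α(E→(T))` is a nested set of separations. -/
theorem irredundant_orderRespecting {D : Type*} [PartialOrder D] [Fintype D] (star : D → D)
    (hinv : ∀ s : D, star (star s) = s)
    (hrev : ∀ r s : D, r ≤ s ↔ star s ≤ star r)
    {V : Type} [Fintype V] (T : SimpleGraph V) (α : V → V → D)
    (hT : IsSTree star Set.univ T α)
    (hstars : ∀ t : V, IsStarSet star (starAt T α t))
    (hirr : Irredundant T α) :
    OrderRespecting T α ∧
      ∀ d d' : D, (∃ x y : V, T.Adj x y ∧ α x y = d) →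
        (∃ x y : V, T.Adj x y ∧ α x y = d') →
        (d ≤ d' ∨ d' ≤ d ∨ d ≤ star d' ∨ star d' ≤ d) :=
  irredundant_orderRespecting_general star T α hT hstars hirr

end SepDuality
end

section
/- Let (T, α) be an irredundant S-tree over a family F of stars. Let e, f be distinct edges of T with orientations e→ < f→ (in the natural ordering of E→(T)) such that α(e→) = α(f←) =: r, where f← is the reversal of f→. Then r is trivial in S→. In particular, T cannot have distinct leaves associated with the same star {r*} unless r is trivial in S→. -/
open Classical

namespace SepDuality

/-!
Through a node `t`, the star at `t` gives `α(a,t) ≤ α(b,t)* = α(t,b)` for distinct neighbours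
`a ≠ b`, so the labels along the path `x y … u v` increase from `r` to `r*`. Let `(t, t')` be the
first edge of the path whose label `s` differs from `r`, entered from `t''`. Then `r < s ≤ r*`,
hence `r ≤ s*`, and irredundancy at `t` gives `r = α(t'',t) ≠ α(t',t) = s*`. Two leaves with
star `{r*}` cannot be adjacent since `r*` is nondegenerate, and otherwise their edges
oriented away from the leaves form such a pair.
-/

open SimpleGraph

section Labels

variable {D : Type*} {V : Type*} {star : D → D} {F : Set (Set D)} {T : SimpleGraph V}
  {α : V → V → D}

lemma label_eq_of_starAt_eq_singleton {a t : V} {s : D} (ht : starAt T α t = {s})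
    (ha : T.Adj a t) :
    α a t = s := by
  simpa only [ht, Set.mem_singleton_iff] using (show α a t ∈ starAt T α t from ⟨a, ha, rfl⟩)

lemma label_eq_of_starAt_eq_singleton_star (hinv : ∀ s : D, star (star s) = s)
    (hsym : ∀ x y : V, T.Adj x y → α y x = star (α x y)) {ℓ y : V} {r : D}
    (hℓ : starAt T α ℓ = {star r}) (hy : T.Adj ℓ y) :
    α ℓ y = r := by
  rw [← hinv (α ℓ y), ← hsym ℓ y hy, label_eq_of_starAt_eq_singleton hℓ hy.symm, hinv]

variable [PartialOrder D]

lemma label_le_label_of_adj (hF : ∀ σ ∈ F, IsStarSet star σ) (hover : IsOver T α F)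
    (hirr : Irredundant T α) (hsym : ∀ x y : V, T.Adj x y → α y x = star (α x y))
    {a b t : V} (ha : T.Adj a t) (hb : T.Adj t b) (hab : a ≠ b) :
    α a t ≤ α t b := by
  rw [hsym b t hb.symm]
  exact (hF _ (hover t)).2 _ ⟨a, ha, rfl⟩ _ ⟨b, hb.symm, rfl⟩ (hirr t a b ha hb.symm hab)

lemma label_le_label_of_isPath (hF : ∀ σ ∈ F, IsStarSet star σ) (hover : IsOver T α F)
    (hirr : Irredundant T α) (hsym : ∀ x y : V, T.Adj x y → α y x = star (α x y))
    {a u w v : V} (q : T.Walk a u) (hq : q.IsPath) (hwa : T.Adj w a) (huv : T.Adj u v)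
    (hw : w ∉ q.support) (hv : v ∉ q.support) (hwv : ¬(w = v ∧ a = u)) :
    α w a ≤ α u v := by
  induction q generalizing w with
  | nil => exact label_le_label_of_adj hF hover hirr hsym hwa huv fun h => hwv ⟨h, rfl⟩
  | @cons a c u hac q ih =>
    rw [Walk.cons_isPath_iff] at hq
    simp only [Walk.support_cons, List.mem_cons, not_or] at hw hv
    have hwc : w ≠ c := fun h => hw.2 (h ▸ q.start_mem_support)
    exact (label_le_label_of_adj hF hover hirr hsym hwa hac hwc).trans
      (ih hq.1 hac huv hq.2 hv.2 fun h => hv.1 h.1.symm)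

lemma trivialIn_of_isPath (hinv : ∀ s : D, star (star s) = s)
    (hrev : ∀ r s : D, r ≤ s ↔ star s ≤ star r)
    (hF : ∀ σ ∈ F, IsStarSet star σ) (hover : IsOver T α F)
    (hirr : Irredundant T α) (hsym : ∀ x y : V, T.Adj x y → α y x = star (α x y))
    {x y u v : V} {r : D} (p : T.Walk y u) (hp : p.IsPath) (hxy : T.Adj x y)
    (huv : T.Adj u v) (hx : x ∉ p.support) (hv : v ∉ p.support) (hxv : ¬(x = v ∧ y = u))
    (h1 : α x y = r) (h2 : α v u = r) :
    TrivialIn star Set.univ r := by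
  induction p generalizing x with
  | nil => exact (hirr _ x v hxy huv.symm (fun h => hxv ⟨h, rfl⟩) (h1.trans h2.symm)).elim
  | @cons y c u hyc q ih =>
    rw [Walk.cons_isPath_iff] at hp
    simp only [Walk.support_cons, List.mem_cons, not_or] at hx hv
    by_cases hs : α y c = r
    · exact ih hp.1 hyc huv hp.2 hv.2 (fun h => hv.1 h.1.symm) hs h2
    have hxc : x ≠ c := fun h => hx.2 (h ▸ q.start_mem_support)
    have hrs : r ≤ α y c := h1 ▸ label_le_label_of_adj hF hover hirr hsym hxy hyc hxc
    have hsr : α y c ≤ star r := by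
      rw [← h2, ← hsym v u huv.symm]
      exact label_le_label_of_isPath hF hover hirr hsym q hp.1 hyc huv hp.2 hv.2
        fun h => hv.1 h.1.symm
    have hrs' : r ≤ star (α y c) := by simpa only [hinv] using (hrev _ _).1 hsr
    refine ⟨α y c, Set.mem_univ _, lt_of_le_of_ne hrs (Ne.symm hs), lt_of_le_of_ne hrs' ?_⟩
    rw [← h1, ← hsym y c hyc]
    exact hirr y x c hxy hyc.symm hxc

lemma trivialIn_of_edgeLT (hinv : ∀ s : D, star (star s) = s)
    (hrev : ∀ r s : D, r ≤ s ↔ star s ≤ star r)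
    (hF : ∀ σ ∈ F, IsStarSet star σ) (hover : IsOver T α F)
    (hirr : Irredundant T α) (hsym : ∀ x y : V, T.Adj x y → α y x = star (α x y))
    {x y u v : V} {r : D} (hxy : T.Adj x y) (huv : T.Adj u v)
    (hlt : edgeLT T (x, y) (u, v)) (h1 : α x y = r) (h2 : α v u = r) :
    TrivialIn star Set.univ r :=
  let ⟨_, hxv, p, hp, hx, hv⟩ := hlt
  trivialIn_of_isPath hinv hrev hF hover hirr hsym p hp hxy huv hx hv hxv h1 h2

lemma not_adj_of_starAt_eq_singleton (hF : ∀ σ ∈ F, IsStarSet star σ) (hover : IsOver T α F)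
    (hsym : ∀ x y : V, T.Adj x y → α y x = star (α x y)) {a b : V} {s : D}
    (ha : starAt T α a = {s}) (hb : starAt T α b = {s}) :
    ¬T.Adj a b := by
  intro hab
  have hba := label_eq_of_starAt_eq_singleton ha hab.symm
  rw [hsym a b hab, label_eq_of_starAt_eq_singleton hb hab] at hba
  exact (hF _ (hover a)).1 s (ha ▸ rfl) hba

end Labels

lemma IsLeaf.neighborSet_subsingleton {V : Type*} {T : SimpleGraph V} {ℓ : V}
    (hℓ : IsLeaf T ℓ) : (T.neighborSet ℓ).Subsingleton :=
  fun _ ha _ hb => hℓ.unique ha hb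

lemma edgeLT_of_isLeaf {V : Type*} {T : SimpleGraph V} (hT : T.Connected) {ℓ₁ ℓ₂ y₁ y₂ : V}
    (hℓ₁ : IsLeaf T ℓ₁) (hℓ₂ : IsLeaf T ℓ₂) (hy₁ : T.Adj ℓ₁ y₁) (hy₂ : T.Adj ℓ₂ y₂)
    (hne : ℓ₁ ≠ ℓ₂) (hnadj : ¬T.Adj ℓ₁ ℓ₂) :
    edgeLT T (ℓ₁, y₁) (y₂, ℓ₂) := by
  have hℓ₁y₂ : ℓ₁ ≠ y₂ := fun h => hnadj (h ▸ hy₂.symm)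
  have hℓ₂y₁ : ℓ₂ ≠ y₁ := fun h => hnadj (h ▸ hy₁)
  obtain ⟨p, hp⟩ := hT.exists_isPath y₁ y₂
  exact ⟨fun h => hℓ₁y₂ h.1, fun h => hne h.1, p, hp,
    hp.isTrail.not_mem_support_of_subsingleton_neighborSet hy₁.ne hℓ₁y₂
      hℓ₁.neighborSet_subsingleton,
    hp.isTrail.not_mem_support_of_subsingleton_neighborSet hℓ₂y₁ hy₂.ne
      hℓ₂.neighborSet_subsingleton⟩

theorem trivial_of_equal_labels_general {D : Type*} [PartialOrder D] (star : D → D)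
    (hinv : ∀ s : D, star (star s) = s)
    (hrev : ∀ r s : D, r ≤ s ↔ star s ≤ star r)
    (F : Set (Set D)) (hF : ∀ σ ∈ F, IsStarSet star σ)
    {V : Type} (T : SimpleGraph V) (α : V → V → D)
    (hT : IsSTree star Set.univ T α) (hover : IsOver T α F)
    (hirr : Irredundant T α)
    (x y u v : V) (hxy : T.Adj x y) (huv : T.Adj u v)
    (hlt : edgeLT T (x, y) (u, v)) (r : D)
    (h1 : α x y = r) (h2 : α v u = r) :
    TrivialIn star Set.univ r ∧
      ∀ (ℓ₁ ℓ₂ : V) (r' : D), IsLeaf T ℓ₁ → IsLeaf T ℓ₂ → ℓ₁ ≠ ℓ₂ →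
        starAt T α ℓ₁ = {star r'} → starAt T α ℓ₂ = {star r'} →
        TrivialIn star Set.univ r' := by
  have hsym := hT.2.2.2
  refine ⟨trivialIn_of_edgeLT hinv hrev hF hover hirr hsym hxy huv hlt h1 h2, ?_⟩
  intro ℓ₁ ℓ₂ r' hℓ₁ hℓ₂ hne hσ₁ hσ₂
  obtain ⟨y₁, hy₁⟩ := hℓ₁.exists
  obtain ⟨y₂, hy₂⟩ := hℓ₂.exists
  have hnadj := not_adj_of_starAt_eq_singleton hF hover hsym hσ₁ hσ₂
  exact trivialIn_of_edgeLT hinv hrev hF hover hirr hsym hy₁ hy₂.symm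
    (edgeLT_of_isLeaf hT.1 hℓ₁ hℓ₂ hy₁ hy₂ hne hnadj)
    (label_eq_of_starAt_eq_singleton_star hinv hsym hσ₁ hy₁)
    (label_eq_of_starAt_eq_singleton_star hinv hsym hσ₂ hy₂)

/-- In an irredundant `S`-tree over a family `F` of stars, if distinct edges have
orientations `e→ < f→` with `α(e→) = α(f←) = r`, then `r` is trivial in `S→`.
In particular, distinct leaves cannot be associated with the same star `{r*}`
unless `r` is trivial. -/
theorem trivial_of_equal_labels {D : Type*} [PartialOrder D] [Fintype D] (star : D → D)
    (hinv : ∀ s : D, star (star s) = s)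
    (hrev : ∀ r s : D, r ≤ s ↔ star s ≤ star r)
    (F : Set (Set D)) (hF : ∀ σ ∈ F, IsStarSet star σ)
    {V : Type} [Fintype V] (T : SimpleGraph V) (α : V → V → D)
    (hT : IsSTree star Set.univ T α) (hover : IsOver T α F)
    (hirr : Irredundant T α)
    (x y u v : V) (hxy : T.Adj x y) (huv : T.Adj u v)
    (hlt : edgeLT T (x, y) (u, v)) (r : D)
    (h1 : α x y = r) (h2 : α v u = r) :
    TrivialIn star Set.univ r ∧
      ∀ (ℓ₁ ℓ₂ : V) (r' : D), IsLeaf T ℓ₁ → IsLeaf T ℓ₂ → ℓ₁ ≠ ℓ₂ →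
        starAt T α ℓ₁ = {star r'} → starAt T α ℓ₂ = {star r'} →
        TrivialIn star Set.univ r' :=
  trivial_of_equal_labels_general star hinv hrev F hF T α hT hover hirr x y u v hxy huv hlt r h1 h2

end SepDuality
end

section
/- Let (S→, ≤, *) be a separation system and F ⊆ 2^{S→}. If there exists an S-tree over F, then no orientation of S avoids F. -/
/-!
At every node `t` the star of `t` lies in `F`, so it is not contained in `O`: some edge `(x, t)`
at `t` has `α (x, t) ∉ O`. This assigns to every node a neighbour, and in a finite tree such an
assignment must choose both orientations of some edge, since a tree has fewer edges than nodes.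
But `O` contains one of the two orientations `α (x, y)` and `α (y, x) = α (x, y)*` of every edge.
-/

open Classical

namespace SepDuality

theorem _root_.SimpleGraph.IsTree.exists_apply_apply_eq_self {V : Type*} [Finite V]
    {T : SimpleGraph V} (hT : T.IsTree) (f : V → V) (hf : ∀ t, T.Adj t (f t)) :
    ∃ t, f (f t) = t := by
  by_contra! hne
  have hinj : Function.Injective fun t ↦ (⟨s(t, f t), hf t⟩ : T.edgeSet) := by
    intro a b hab
    rcases Sym2.eq_iff.mp (congrArg Subtype.val hab) with ⟨h, -⟩ | ⟨rfl, h⟩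
    · exact h
    · exact absurd h (hne b)
  have hle : Nat.card V ≤ Nat.card T.edgeSet := Nat.card_le_card_of_injective _ hinj
  have hcard := (SimpleGraph.isTree_iff_connected_and_card.mp hT).2
  omega

section

variable {D : Type*} {V : Type*} {star : D → D} {S : Set D}
  {T : SimpleGraph V} {α : V → V → D}

theorem IsOrientation.mem_or_mem_of_adj {O : Set D} (hO : IsOrientation star S O)
    (hT : IsSTree star S T α) {x y : V} (hxy : T.Adj x y) : α x y ∈ O ∨ α y x ∈ O := by
  rw [hT.2.2.2 x y hxy]
  exact hO.2.1 _ (hT.2.2.1 x y hxy)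

theorem Avoids.exists_adj_notMem {O : Set D} {F : Set (Set D)} (hO : Avoids O F)
    (hover : IsOver T α F) (t : V) : ∃ x, T.Adj x t ∧ α x t ∉ O := by
  obtain ⟨d, ⟨x, hxt, rfl⟩, hd⟩ := Set.not_subset.mp (hO _ (hover t))
  exact ⟨x, hxt, hd⟩

end

theorem no_orientation_avoids_general {D : Type*} (star : D → D)
    (F : Set (Set D))
    {V : Type} [Fintype V] (T : SimpleGraph V) (α : V → V → D)
    (hT : IsSTree star Set.univ T α) (hover : IsOver T α F) :
    ∀ O : Set D, IsOrientation star Set.univ O → ¬Avoids O F := by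
  intro O hO hAv
  choose f hfadj hfO using hAv.exists_adj_notMem hover
  obtain ⟨t, ht⟩ := SimpleGraph.IsTree.exists_apply_apply_eq_self ⟨hT.1, hT.2.1⟩ f
    fun t ↦ (hfadj t).symm
  rcases hO.mem_or_mem_of_adj hT (hfadj t) with h | h
  · exact hfO t h
  · exact hfO (f t) (by rwa [ht])

/-- If there exists an `S`-tree over `F`, then no orientation of `S` avoids `F`. -/
theorem no_orientation_avoids {D : Type*} [PartialOrder D] (star : D → D)
    (hinv : ∀ s : D, star (star s) = s)
    (hrev : ∀ r s : D, r ≤ s ↔ star s ≤ star r)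
    (F : Set (Set D))
    {V : Type} [Fintype V] (T : SimpleGraph V) (α : V → V → D)
    (hT : IsSTree star Set.univ T α) (hover : IsOver T α F) :
    ∀ O : Set D, IsOrientation star Set.univ O → ¬Avoids O F :=
  no_orientation_avoids_general star F T α hT hover

end SepDuality
end

section
/- Let (U→, ≤, *, ∨, ∧) be a universe of separations containing a separation system (S→, ≤, *) with the induced order and involution. Let (T, α) be an order-respecting S-tree, rooted at some leaf x with incident edge e_x (oriented away from x as e_x→), and let s0 ∈ S→ be nondegenerate with α(e_x→) ≤ s0. Assume that the shift α' = α_{x,s0} maps E→(T) into S→. If s0 is nontrivial in S→, or if the supremum in U→ of two separations that are trivial in S→ is never degenerate, then (T, α') is an order-respecting S-tree. -/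
open Classical

/-!
Measure distances from the root `x`. Since `x` is a leaf, an oriented edge `(a, b)` lies above
`e_x→` exactly when it points away from `x`, i.e. `dist x b = dist x a + 1`: along a path that
starts by moving away from `x` and never turns back, the distance keeps growing, because every
vertex has only one neighbour closer to `x`. So exactly one orientation of each edge lies above
`e_x→`, and these orientations form an up-closed set. Hence `α'` commutes with `*`, and it is
order-respecting because `· ⊔ s0` is monotone and `*` is order-reversing.
-/

namespace SimpleGraph

variable {V : Type*} {G : SimpleGraph V}

theorem IsAcyclic.eq_of_adj_of_dist_eq_add_one (hG : G.IsAcyclic) (hconn : G.Connected)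
    {x u w v : V} (hu : G.Adj u v) (hw : G.Adj w v)
    (hdu : G.dist x v = G.dist x u + 1) (hdw : G.dist x v = G.dist x w + 1) : u = w := by
  obtain ⟨p, -, hpl⟩ := hconn.exists_path_of_dist x u
  obtain ⟨q, -, hql⟩ := hconn.exists_path_of_dist x w
  have hpv : (p.concat hu).IsPath :=
    (p.concat hu).isPath_of_length_eq_dist (by rw [Walk.length_concat, hpl, hdu])
  have hqv : (q.concat hw).IsPath :=
    (q.concat hw).isPath_of_length_eq_dist (by rw [Walk.length_concat, hql, hdw])
  have hpq : p.concat hu = q.concat hw :=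
    congrArg Subtype.val ((hG.subsingleton_path x v).elim ⟨_, hpv⟩ ⟨_, hqv⟩)
  simpa using congrArg Walk.penultimate hpq

theorem IsAcyclic.dist_eq_add_one_of_adj_of_ne (hG : G.IsAcyclic) (hconn : G.Connected)
    {x a b c : V} (hab : G.Adj a b) (hbc : G.Adj b c) (hac : a ≠ c)
    (hd : G.dist x b = G.dist x a + 1) : G.dist x c = G.dist x b + 1 :=
  (hG.dist_eq_dist_add_one_of_adj_of_reachable x hbc (hconn x b)).resolve_left
    fun h => hac (hG.eq_of_adj_of_dist_eq_add_one hconn hab hbc.symm hd h)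

end SimpleGraph

namespace SepDuality

open SimpleGraph SimpleGraph.Walk

section Tree

variable {V : Type*} {T : SimpleGraph V}

theorem edgeLT_reverse {a b c d : V} (h : edgeLT T (a, b) (c, d)) :
    edgeLT T (d, c) (b, a) := by
  obtain ⟨h1, h2, p, hp, h3, h4⟩ := h
  refine ⟨fun ⟨u, v⟩ => h1 ⟨v.symm, u.symm⟩, fun ⟨u, v⟩ => h2 ⟨u.symm, v.symm⟩,
    p.reverse, hp.reverse, ?_, ?_⟩ <;> simpa [support_reverse]

theorem edgeLE_reverse {a b c d : V} (h : edgeLE T (a, b) (c, d)) :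
    edgeLE T (d, c) (b, a) := by
  rcases h with h | h
  · obtain ⟨rfl, rfl⟩ := Prod.mk.inj h
    exact Or.inl rfl
  · exact Or.inr (edgeLT_reverse h)

theorem dist_eq_add_one_of_edgeLT (hconn : T.Connected) (hacyc : T.IsAcyclic)
    {x a b c d : V} (hab : T.Adj a b) (hcd : T.Adj c d) (hlt : edgeLT T (a, b) (c, d))
    (hd : T.dist x b = T.dist x a + 1) : T.dist x d = T.dist x c + 1 := by
  obtain ⟨-, hne, p, hp, hap, hdp⟩ : _ ∧ ¬(a = d ∧ b = c) ∧
    ∃ p : T.Walk b c, p.IsPath ∧ a ∉ p.support ∧ d ∉ p.support := hlt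
  induction p generalizing a with
  | nil => exact hacyc.dist_eq_add_one_of_adj_of_ne hconn hab hcd (fun h => hne ⟨h, rfl⟩) hd
  | @cons b b' c hbb' q ih =>
    rw [support_cons, List.mem_cons, not_or] at hap hdp
    obtain ⟨hq, hbq⟩ := (cons_isPath_iff _ _).mp hp
    have hab' : a ≠ b' := by
      rintro rfl
      exact hap.2 q.start_mem_support
    exact ih hbb' hcd (hacyc.dist_eq_add_one_of_adj_of_ne hconn hab hbb' hab' hd)
      (fun h => hdp.1 h.1.symm) hq hbq hdp.2

theorem edgeLE_root_iff (hconn : T.Connected) (hacyc : T.IsAcyclic) {x y a b : V}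
    (hxy : T.Adj x y) (hleaf : ∀ z, T.Adj x z → z = y) (hab : T.Adj a b) :
    edgeLE T (x, y) (a, b) ↔ T.dist x b = T.dist x a + 1 := by
  have hdy : T.dist x y = T.dist x x + 1 := by rw [dist_self, dist_eq_one_iff_adj.mpr hxy]
  constructor
  · rintro (h | h)
    · obtain ⟨rfl, rfl⟩ := Prod.mk.inj h
      exact hdy
    · exact dist_eq_add_one_of_edgeLT hconn hacyc hxy hab h hdy
  · intro hd
    by_cases hax : a = x
    · subst hax
      exact Or.inl (by rw [hleaf b hab])
    obtain ⟨P, hP, hPl⟩ := hconn.exists_path_of_dist x a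
    obtain ⟨w, hxw, q, rfl⟩ := not_nil_iff.mp (not_nil_of_ne (p := P) (Ne.symm hax))
    obtain rfl := hleaf w hxw
    obtain ⟨hq, hxq⟩ := (cons_isPath_iff hxw q).mp hP
    -- `b` is farther from `x` than `a`, so it is not on the geodesic from `x` to `a`
    have hbP : b ∉ (cons hxw q).support := fun hb => by
      have := dist_le ((cons hxw q).takeUntil b hb)
      have := (cons hxw q).length_takeUntil_le_length hb
      omega
    refine Or.inr ⟨fun h => hax h.1.symm, fun h => ?_, q, hq, hxq, fun hb => hbP (by simp [hb])⟩
    have hxb : x = b := h.1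
    rw [← hxb, dist_self] at hd
    omega

theorem edgeLE_root_swap_iff (hconn : T.Connected) (hacyc : T.IsAcyclic) {x y a b : V}
    (hxy : T.Adj x y) (hleaf : ∀ z, T.Adj x z → z = y) (hab : T.Adj a b) :
    edgeLE T (x, y) (b, a) ↔ ¬edgeLE T (x, y) (a, b) := by
  rw [edgeLE_root_iff hconn hacyc hxy hleaf hab, edgeLE_root_iff hconn hacyc hxy hleaf hab.symm]
  rcases hacyc.dist_eq_dist_add_one_of_adj_of_reachable x hab (hconn x a) with h | h <;> omega

theorem edgeLE_root_trans (hconn : T.Connected) (hacyc : T.IsAcyclic) {x y a b c d : V}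
    (hxy : T.Adj x y) (hleaf : ∀ z, T.Adj x z → z = y) (hab : T.Adj a b) (hcd : T.Adj c d)
    (hxab : edgeLE T (x, y) (a, b)) (habcd : edgeLE T (a, b) (c, d)) :
    edgeLE T (x, y) (c, d) := by
  rcases habcd with h | h
  · rwa [← h]
  · rw [edgeLE_root_iff hconn hacyc hxy hleaf hcd]
    exact dist_eq_add_one_of_edgeLT hconn hacyc hab hcd h
      ((edgeLE_root_iff hconn hacyc hxy hleaf hab).mp hxab)

end Tree

section Shift

variable {U : Type*} [Lattice U] {V : Type*} {T : SimpleGraph V}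

theorem shiftAlpha_swap (star : U → U) (hinv : ∀ s, star (star s) = s)
    (hconn : T.Connected) (hacyc : T.IsAcyclic) {x y : V} (hxy : T.Adj x y)
    (hleaf : ∀ z, T.Adj x z → z = y) (s0 : U) (α : V → V → U) {a b : V} (hab : T.Adj a b) :
    shiftAlpha star T x y s0 α b a = star (shiftAlpha star T x y s0 α a b) := by
  have hswap := edgeLE_root_swap_iff hconn hacyc hxy hleaf hab
  by_cases h : edgeLE T (x, y) (a, b)
  · simp only [shiftAlpha, if_pos h, if_neg (mt hswap.mp (not_not_intro h))]
  · simp only [shiftAlpha, if_pos (hswap.mpr h), if_neg h, hinv]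

theorem orderRespecting_shiftAlpha (star : U → U) (hinv : ∀ s, star (star s) = s)
    (hrev : ∀ r s, r ≤ s ↔ star s ≤ star r) (hconn : T.Connected) (hacyc : T.IsAcyclic)
    {x y : V} (hxy : T.Adj x y) (hleaf : ∀ z, T.Adj x z → z = y) (s0 : U) (α : V → V → U)
    (hα : ∀ a b, T.Adj a b → α b a = star (α a b)) (hOR : OrderRespecting T α) :
    OrderRespecting T (shiftAlpha star T x y s0 α) := by
  rintro ⟨a, b⟩ ⟨c, d⟩ hab hcd hle
  dsimp only at hab hcd ⊢
  by_cases hxab : edgeLE T (x, y) (a, b)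
  · have hxcd := edgeLE_root_trans hconn hacyc hxy hleaf hab hcd hxab hle
    simp only [shiftAlpha, if_pos hxab, if_pos hxcd]
    exact sup_le_sup_right (hOR _ _ hab hcd hle) s0
  by_cases hxcd : edgeLE T (x, y) (c, d)
  · simp only [shiftAlpha, if_neg hxab, if_pos hxcd]
    calc star (α b a ⊔ s0) ≤ star (α b a) := (hrev _ _).mp le_sup_left
      _ = α a b := by rw [hα a b hab, hinv]
      _ ≤ α c d := hOR _ _ hab hcd hle
      _ ≤ α c d ⊔ s0 := le_sup_left
  · simp only [shiftAlpha, if_neg hxab, if_neg hxcd]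
    exact (hrev _ _).mp (sup_le_sup_right (hOR _ _ hcd.symm hab.symm (edgeLE_reverse hle)) s0)

end Shift

theorem shift_orderRespecting_general {U : Type*} [Lattice U] (star : U → U)
    (hinv : ∀ s : U, star (star s) = s)
    (hrev : ∀ r s : U, r ≤ s ↔ star s ≤ star r)
    (S : Set U)
    {V : Type} (T : SimpleGraph V) (α : V → V → U)
    (hT : IsSTree star S T α) (hOR : OrderRespecting T α)
    (x y : V) (hxy : T.Adj x y) (hleaf : ∀ z : V, T.Adj x z → z = y)
    (s0 : U)
    (hmaps : ∀ a b : V, T.Adj a b → shiftAlpha star T x y s0 α a b ∈ S) :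
    IsSTree star S T (shiftAlpha star T x y s0 α) ∧
      OrderRespecting T (shiftAlpha star T x y s0 α) := by
  obtain ⟨hconn, hacyc, -, hα⟩ := hT
  refine ⟨⟨hconn, hacyc, hmaps, fun _ _ => ?_⟩, ?_⟩
  · exact shiftAlpha_swap star hinv hconn hacyc hxy hleaf s0 α
  · exact orderRespecting_shiftAlpha star hinv hrev hconn hacyc hxy hleaf s0 α hα hOR

/-- **Shifting lemma.** Let `(T, α)` be an order-respecting `S`-tree rooted at a leaf `x`
(with unique neighbour `y`), `s0 ∈ S→` nondegenerate with `α(e_x→) ≤ s0`, and assume the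
shift `α' = α_{x,s0}` maps `E→(T)` into `S→`. If `s0` is nontrivial in `S→`, or if the
supremum in `U→` of two separations trivial in `S→` is never degenerate, then `(T, α')`
is an order-respecting `S`-tree. -/
theorem shift_orderRespecting {U : Type*} [Lattice U] (star : U → U)
    (hinv : ∀ s : U, star (star s) = s)
    (hrev : ∀ r s : U, r ≤ s ↔ star s ≤ star r)
    (S : Set U) (hSstar : ∀ s ∈ S, star s ∈ S)
    {V : Type} [Fintype V] (T : SimpleGraph V) (α : V → V → U)
    (hT : IsSTree star S T α) (hOR : OrderRespecting T α)
    (x y : V) (hxy : T.Adj x y) (hleaf : ∀ z : V, T.Adj x z → z = y)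
    (s0 : U) (hs0S : s0 ∈ S) (hs0nd : star s0 ≠ s0) (hle : α x y ≤ s0)
    (hmaps : ∀ a b : V, T.Adj a b → shiftAlpha star T x y s0 α a b ∈ S)
    (hcase : ¬TrivialIn star S s0 ∨
      ∀ r r' : U, r ∈ S → r' ∈ S → TrivialIn star S r → TrivialIn star S r' →
        star (r ⊔ r') ≠ r ⊔ r') :
    IsSTree star S T (shiftAlpha star T x y s0 α) ∧
      OrderRespecting T (shiftAlpha star T x y s0 α) :=
  shift_orderRespecting_general star hinv hrev S T α hT hOR x y hxy hleaf s0 hmaps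

end SepDuality
end

section
/- If (S→, ≤, *) is a nonempty finite separation system, then its oriented separations cannot all be trivial or co-trivial: there exists an unoriented separation s = {s→, s←} ∈ S such that neither s→ nor s← is trivial in S→. Indeed, if r is maximal among the separations trivial in S→, then both orientations of every s ∈ S witnessing the triviality of r are nontrivial. -/
open Classical

namespace SepDuality

section Trivial

variable {D : Type*} [PartialOrder D] {star : D → D} {S : Set D}

theorem not_trivialIn_witness_of_maximal {r s : D}
    (hmax : ∀ r' : D, TrivialIn star S r' → ¬r < r') (hs : r < s) (hs' : r < star s) :
    ¬TrivialIn star S s ∧ ¬TrivialIn star S (star s) :=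
  ⟨fun h => hmax s h hs, fun h => hmax (star s) h hs'⟩

theorem exists_mem_not_trivialIn_and_not_trivialIn_star [Finite D] (hS : S.Nonempty) :
    ∃ s ∈ S, ¬TrivialIn star S s ∧ ¬TrivialIn star S (star s) := by
  by_cases htriv : ∃ r, TrivialIn star S r
  · obtain ⟨r, hr⟩ := (Set.toFinite {r | TrivialIn star S r}).exists_maximal htriv
    obtain ⟨s, hsS, hs, hs'⟩ := hr.prop
    exact ⟨s, hsS, not_trivialIn_witness_of_maximal (fun _ h => hr.not_gt h) hs hs'⟩
  · push Not at htriv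
    obtain ⟨s, hs⟩ := hS
    exact ⟨s, hs, htriv s, htriv (star s)⟩

end Trivial

theorem exists_nontrivial_general {D : Type*} [PartialOrder D] [Fintype D] [Nonempty D]
    (star : D → D) :
    (∃ s : D, ¬TrivialIn star Set.univ s ∧ ¬TrivialIn star Set.univ (star s)) ∧
      ∀ r : D, TrivialIn star Set.univ r →
        (∀ r' : D, TrivialIn star Set.univ r' → ¬r < r') →
        ∀ s : D, r < s → r < star s →
          ¬TrivialIn star Set.univ s ∧ ¬TrivialIn star Set.univ (star s) := by
  obtain ⟨s, -, hs⟩ :=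
    exists_mem_not_trivialIn_and_not_trivialIn_star (star := star) Set.univ_nonempty
  exact ⟨⟨s, hs⟩, fun _ _ hmax _ => not_trivialIn_witness_of_maximal hmax⟩

/-- In a nonempty finite separation system, not all separations are trivial or co-trivial:
there is a separation neither of whose orientations is trivial. Indeed, if `r` is maximal
among the trivial separations, then both orientations of any witness of its triviality
are nontrivial. -/
theorem exists_nontrivial {D : Type*} [PartialOrder D] [Fintype D] [Nonempty D]
    (star : D → D)
    (hinv : ∀ s : D, star (star s) = s)
    (hrev : ∀ r s : D, r ≤ s ↔ star s ≤ star r) :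
    (∃ s : D, ¬TrivialIn star Set.univ s ∧ ¬TrivialIn star Set.univ (star s)) ∧
      ∀ r : D, TrivialIn star Set.univ r →
        (∀ r' : D, TrivialIn star Set.univ r' → ¬r < r') →
        ∀ s : D, r < s → r < star s →
          ¬TrivialIn star Set.univ s ∧ ¬TrivialIn star Set.univ (star s) :=
  exists_nontrivial_general star

end SepDuality
end

section
/- Let (S→, ≤, *) be a finite separation system and F ⊆ 2^{S→} a family of stars. If there exists an S-tree over F, then there exists a tight S-tree over the subfamily F' ⊆ F consisting of the antisymmetric stars in F. -/
/-!
Suppose a node `t` of an `S`-tree is not tight: it has neighbours `x ≠ y` with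
`α(y, t) = α(x, t)*`. Delete `t` together with all its branches except those at `x` and `y`,
and join `x` to `y` by a new edge with `α(x, y) := α(t, y)` and `α(y, x) := α(t, x)`.
The result is again an `S`-tree (the new labels are compatible with `*` precisely because
`α(y, t) = α(x, t)*`), and every remaining node sees exactly the star it saw before. Since the
tree has shrunk, iterating ends in a tight `S`-tree all of whose stars are stars of the original
tree, so they lie in `F` and are antisymmetric.
-/

open Classical

namespace SimpleGraph

section Bypass

variable {V : Type*} {T : SimpleGraph V} {t x y : V}

/-- The vertex set of the component of `T - t` containing `x` (empty if `x = t`). -/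
def branch (T : SimpleGraph V) (t x : V) : Set V :=
  {v | ∃ w : T.Walk v x, t ∉ w.support}

lemma notMem_branch : t ∉ branch T t x :=
  fun ⟨w, hw⟩ => hw w.start_mem_support

lemma mem_branch_self (hx : x ≠ t) : x ∈ branch T t x :=
  ⟨.nil, by simpa [eq_comm] using hx⟩

lemma mem_branch_of_adj {a b : V} (ha : a ∈ branch T t x) (hab : T.Adj a b) (hb : b ≠ t) :
    b ∈ branch T t x := by
  obtain ⟨w, hw⟩ := ha
  exact ⟨.cons hab.symm w, by simp [hw, Ne.symm hb]⟩

lemma IsAcyclic.eq_of_adj_of_walk_avoiding (hT : T.IsAcyclic) (hx : T.Adj x t)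
    (hy : T.Adj y t) (w : T.Walk x y) (ht : t ∉ w.support) : x = y := by
  by_contra hxy
  refine ht (w.support_toPath_subset_support ?_)
  exact hT.mem_support_of_ne_mem_support_of_adj_of_isPath w.toPath.2 (Walk.IsPath.of_adj hx) hy
    (by simp [Ne.symm hxy, hy.ne])

lemma IsAcyclic.eq_of_mem_branch {z : V} (hT : T.IsAcyclic) (hx : T.Adj x t) (hz : T.Adj z t)
    (hzx : z ∈ branch T t x) : z = x :=
  let ⟨w, hw⟩ := hzx
  hT.eq_of_adj_of_walk_avoiding hz hx w hw

lemma reachable_induce_of_mem_branch {P : Set V} (hP : branch T t x ⊆ P) (hxP : x ∈ P) {v : V}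
    (hv : v ∈ branch T t x) : (T.induce P).Reachable ⟨v, hP hv⟩ ⟨x, hxP⟩ := by
  obtain ⟨w, hw⟩ := hv
  exact ⟨w.induce P fun z hz =>
    hP ⟨w.dropUntil z hz, fun h => hw (w.support_dropUntil_subset_support hz h)⟩⟩

def bypass (T : SimpleGraph V) (t x y : V) : SimpleGraph ↥(branch T t x ∪ branch T t y) :=
  (T ⊔ edge x y).induce (branch T t x ∪ branch T t y)

lemma bypass_eq (hx : x ≠ t) (hy : y ≠ t) :
    bypass T t x y = T.induce (branch T t x ∪ branch T t y) ⊔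
      edge ⟨x, .inl (mem_branch_self hx)⟩ ⟨y, .inr (mem_branch_self hy)⟩ := by
  ext a b
  simp [bypass, edge_adj, Subtype.ext_iff]

lemma bypass_connected (hx : x ≠ t) (hy : y ≠ t) (hxy : x ≠ y) :
    (bypass T t x y).Connected := by
  set X : ↥(branch T t x ∪ branch T t y) := ⟨x, .inl (mem_branch_self hx)⟩
  set Y : ↥(branch T t x ∪ branch T t y) := ⟨y, .inr (mem_branch_self hy)⟩
  have hreach : ∀ a, (T.induce _ ⊔ edge X Y).Reachable a X := by
    rintro ⟨a, ha | ha⟩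
    · exact (reachable_induce_of_mem_branch Set.subset_union_left X.2 ha).mono le_sup_left
    · refine ((reachable_induce_of_mem_branch Set.subset_union_right Y.2 ha).mono
        le_sup_left).trans (Adj.reachable ?_)
      simp [edge_adj, X, Y, Subtype.ext_iff, hxy.symm]
  rw [bypass_eq hx hy, connected_iff]
  exact ⟨fun a b => (hreach a).trans (hreach b).symm, ⟨X⟩⟩

lemma IsAcyclic.bypass (hT : T.IsAcyclic) (hx : T.Adj x t) (hy : T.Adj y t) (hxy : x ≠ y) :
    (bypass T t x y).IsAcyclic := by
  rw [bypass_eq hx.ne hy.ne]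
  refine (hT.induce _).sup_edge_of_not_reachable fun ⟨w⟩ => hxy ?_
  refine hT.eq_of_adj_of_walk_avoiding hx hy (w.map (Embedding.induce _).toHom) ?_
  change t ∉ (w.map (Embedding.induce _).toHom).support
  simp only [Walk.support_map, List.mem_map, not_exists, not_and]
  intro a _ hat
  change (a : V) = t at hat
  exact a.2.elim (notMem_branch <| hat ▸ ·) (notMem_branch <| hat ▸ ·)

end Bypass

end SimpleGraph

namespace SepDuality

open SimpleGraph

section Bypass

variable {D : Type*} {V : Type*} {T : SimpleGraph V} {t x y : V} {α : V → V → D}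

/-- The edges of `bypass T t x y` missing from `T` are `xy` and `yx`; they take the labels of
`ty` and `tx`. -/
noncomputable def bypassLabel (T : SimpleGraph V) (t x y : V) (α : V → V → D)
    (a b : ↥(branch T t x ∪ branch T t y)) : D :=
  α (if T.Adj a b then a else t) b

lemma adj_of_bypass_adj (hx : T.Adj x t) (hy : T.Adj y t) {a b : ↥(branch T t x ∪ branch T t y)}
    (h : (bypass T t x y).Adj a b) : T.Adj (if T.Adj a b then a else t) b := by
  split_ifs with hab
  · exact hab
  · simp only [bypass, induce_adj, sup_adj, edge_adj, hab, false_or] at h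
    rcases h with ⟨⟨-, hb⟩ | ⟨-, hb⟩, -⟩ <;> rw [hb]
    exacts [hy.symm, hx.symm]

lemma bypassLabel_swap {star : D → D} (hsym : ∀ a b, T.Adj a b → α b a = star (α a b))
    (hx : T.Adj x t) (hy : T.Adj y t) (hα : α y t = star (α x t))
    {a b : ↥(branch T t x ∪ branch T t y)} (h : (bypass T t x y).Adj a b) :
    bypassLabel T t x y α b a = star (bypassLabel T t x y α a b) := by
  by_cases hab : T.Adj a b
  · simp [bypassLabel, hab, hab.symm, hsym _ _ hab]
  have hba : ¬T.Adj b a := fun h => hab h.symm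
  simp only [bypass, induce_adj, sup_adj, edge_adj, hab, false_or] at h
  simp only [bypassLabel, hab, hba, if_false]
  rcases h with ⟨⟨ha, hb⟩ | ⟨ha, hb⟩, -⟩ <;> rw [ha, hb]
  · rw [hsym _ _ hx, ← hα, hsym _ _ hy.symm]
  · rw [hsym _ _ hy, hα, hsym _ _ hx]

lemma starAt_bypass [PartialOrder D] (hT : T.IsAcyclic) (hx : T.Adj x t) (hy : T.Adj y t)
    (hxy : x ≠ y) (a : ↥(branch T t x ∪ branch T t y)) :
    starAt (bypass T t x y) (bypassLabel T t x y α) a = starAt T α a := by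
  ext d
  constructor
  · rintro ⟨c, hca, rfl⟩
    exact ⟨_, adj_of_bypass_adj hx hy hca, rfl⟩
  rintro ⟨c, hca, rfl⟩
  by_cases hct : c = t
  · subst hct
    have hnxy : ¬T.Adj x y := fun h =>
      hxy (hT.eq_of_adj_of_walk_avoiding hx hy h.toWalk (by simp [hx.ne', hy.ne']))
    rcases a with ⟨a, ha | ha⟩
    · have hax : a = x := hT.eq_of_mem_branch hx hca.symm ha
      subst hax
      exact ⟨⟨y, .inr (mem_branch_self hy.ne)⟩, by simp [bypass, edge_adj, hxy.symm],
        by simp [bypassLabel, mt Adj.symm hnxy]⟩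
    · have hay : a = y := hT.eq_of_mem_branch hy hca.symm ha
      subst hay
      exact ⟨⟨x, .inl (mem_branch_self hx.ne)⟩, by simp [bypass, edge_adj, hxy],
        by simp [bypassLabel, hnxy]⟩
  · have hc : c ∈ branch T t x ∪ branch T t y :=
      a.2.imp (mem_branch_of_adj · hca.symm hct) (mem_branch_of_adj · hca.symm hct)
    exact ⟨⟨c, hc⟩, by simp [bypass, hca], by simp [bypassLabel, hca]⟩

lemma IsSTree.bypass [PartialOrder D] {star : D → D} {S : Set D} (hT : IsSTree star S T α)
    (hx : T.Adj x t) (hy : T.Adj y t) (hxy : x ≠ y) (hα : α y t = star (α x t)) :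
    IsSTree star S (SimpleGraph.bypass T t x y) (bypassLabel T t x y α) :=
  ⟨bypass_connected hx.ne hy.ne hxy, hT.2.1.bypass hx hy hxy,
    fun _ _ h => hT.2.2.1 _ _ (adj_of_bypass_adj hx hy h),
    fun _ _ h => bypassLabel_swap hT.2.2.2 hx hy hα h⟩

end Bypass

lemma exists_adj_of_not_tight {D : Type*} [PartialOrder D] {V : Type*} {star : D → D}
    {T : SimpleGraph V} {α : V → V → D} (h : ¬Tight star T α) :
    ∃ t x y, T.Adj x t ∧ T.Adj y t ∧ x ≠ y ∧ α y t = star (α x t) := by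
  simp only [Tight, not_forall, not_not] at h
  obtain ⟨t, _, ⟨x, hx, rfl⟩, hdeg, y, hy, hα⟩ := h
  exact ⟨t, x, y, hx, hy, fun hxy => hdeg (by rw [← hα, hxy]), hα⟩

theorem IsSTree.exists_tight {D : Type*} [PartialOrder D] {star : D → D} {S : Set D}
    {V : Type} [Fintype V] {T : SimpleGraph V} {α : V → V → D} (hT : IsSTree star S T α) :
    ∃ (V' : Type) (_ : Fintype V') (T' : SimpleGraph V') (α' : V' → V' → D),
      IsSTree star S T' α' ∧ Tight star T' α' ∧
        Set.range (starAt T' α') ⊆ Set.range (starAt T α) := by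
  induction hn : Fintype.card V using Nat.strong_induction_on generalizing V with
  | _ n ih =>
  by_cases htight : Tight star T α
  · exact ⟨V, inferInstance, T, α, hT, htight, subset_rfl⟩
  obtain ⟨t, x, y, hx, hy, hxy, hα⟩ := exists_adj_of_not_tight htight
  have hcard : Fintype.card ↥(branch T t x ∪ branch T t y) < n :=
    hn ▸ Fintype.card_subtype_lt (fun ht => ht.elim notMem_branch notMem_branch)
  obtain ⟨V', hV', T', α', hT', htight', hstars⟩ := ih _ hcard (hT.bypass hx hy hxy hα) rfl
  refine ⟨V', hV', T', α', hT', htight', hstars.trans ?_⟩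
  rintro _ ⟨a, rfl⟩
  exact ⟨a, (starAt_bypass hT.2.1 hx hy hxy a).symm⟩

theorem tight_STree_over_antisymmetric_general {D : Type*} [PartialOrder D]
    (star : D → D)
    (F : Set (Set D))
    (h : ∃ (V : Type) (_ : Fintype V) (T : SimpleGraph V) (α : V → V → D),
      IsSTree star Set.univ T α ∧ IsOver T α F) :
    ∃ (V : Type) (_ : Fintype V) (T : SimpleGraph V) (α : V → V → D),
      IsSTree star Set.univ T α ∧ Tight star T α ∧
      IsOver T α {σ ∈ F | ∀ s ∈ σ, star s ≠ s → star s ∉ σ} := by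
  obtain ⟨V, _, T, α, hT, hover⟩ := h
  obtain ⟨V', hV', T', α', hT', htight, hstars⟩ := hT.exists_tight
  refine ⟨V', hV', T', α', hT', htight, fun t => ⟨?_, htight t⟩⟩
  obtain ⟨s, hs⟩ := hstars ⟨t, rfl⟩
  exact hs ▸ hover s

/-- If there is an `S`-tree over a family `F` of stars, then there is a tight `S`-tree
over the subfamily of antisymmetric stars in `F`. -/
theorem tight_STree_over_antisymmetric {D : Type*} [PartialOrder D] [Fintype D]
    (star : D → D)
    (hinv : ∀ s : D, star (star s) = s)
    (hrev : ∀ r s : D, r ≤ s ↔ star s ≤ star r)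
    (F : Set (Set D)) (hF : ∀ σ ∈ F, IsStarSet star σ)
    (h : ∃ (V : Type) (_ : Fintype V) (T : SimpleGraph V) (α : V → V → D),
      IsSTree star Set.univ T α ∧ IsOver T α F) :
    ∃ (V : Type) (_ : Fintype V) (T : SimpleGraph V) (α : V → V → D),
      IsSTree star Set.univ T α ∧ Tight star T α ∧
      IsOver T α {σ ∈ F | ∀ s ∈ σ, star s ≠ s → star s ∉ σ} :=
  tight_STree_over_antisymmetric_general star F h

end SepDuality
end
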